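/- arXiv:1905.04187 — 4 statements merged into one kernel-verified Lean document; each statement's English description precedes it below -/
import Mathlib

section
/- The singular variety 𝒱 does not intersect the domain of convergence 𝒟 of F; that is, no zero of H lies in 𝒟. -/
/-
If the expansion of `F = G/H` converged absolutely at a zero `z` of `H`, the Cauchy product of
that series with the (finite) expansion of `H` would be absolutely convergent and would sum to
`F(z) · H(z) = 0`; but, since `(G · H⁻¹) · H = G` formally, it is the expansion of `G`, so
`G(z) = 0`. A Bézout identity `a G + b H = 1` then gives `0 = 1` at `z`.
-/

open MvPolynomial

/-- Coefficients of the power series expansion of `F = G/H` at the origin,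
    i.e. the coefficients of the formal power series `G · H⁻¹`. -/
noncomputable def coeffF {n : ℕ} (G H : MvPolynomial (Fin n) ℂ) (i : Fin n →₀ ℕ) : ℂ :=
  MvPowerSeries.coeff i ((G : MvPowerSeries (Fin n) ℂ) * (H : MvPowerSeries (Fin n) ℂ)⁻¹)

/-- The domain of convergence: interior of the set of points where the family
    `(f_i z^i)` is absolutely summable. -/
noncomputable def domConv {n : ℕ} (G H : MvPolynomial (Fin n) ℂ) : Set (Fin n → ℂ) :=
  interior {z | Summable fun i : Fin n →₀ ℕ => ‖coeffF G H i * ∏ j, z j ^ i j‖}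

section

variable {σ R : Type*} [Fintype σ]

theorem prod_pow_add [CommMonoid R] (z : σ → R) (a b : σ →₀ ℕ) :
    ∏ j, z j ^ (a + b) j = (∏ j, z j ^ a j) * ∏ j, z j ^ b j := by
  simp only [Finsupp.coe_add, Pi.add_apply, pow_add, Finset.prod_mul_distrib]

theorem MvPolynomial.hasSum_coeff_mul_prod_pow [CommSemiring R] [TopologicalSpace R]
    (p : MvPolynomial σ R) (z : σ → R) :
    HasSum (fun i => coeff i p * ∏ j, z j ^ i j) (eval z p) := by
  rw [eval_eq']
  exact hasSum_sum_of_ne_finset_zero fun i hi => by rw [notMem_support_iff.mp hi, zero_mul]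

theorem MvPolynomial.summable_norm_coeff_mul_prod_pow [SeminormedCommRing R]
    (p : MvPolynomial σ R) (z : σ → R) :
    Summable fun i => ‖coeff i p * ∏ j, z j ^ i j‖ :=
  summable_of_ne_finset_zero (s := p.support) fun i hi => by
    rw [notMem_support_iff.mp hi, zero_mul, norm_zero]

theorem MvPowerSeries.tsum_coeff_mul_mul_prod_pow [NormedCommRing R] [CompleteSpace R]
    (φ ψ : MvPowerSeries σ R) (z : σ → R)
    (hφ : Summable fun i => ‖coeff i φ * ∏ j, z j ^ i j‖)
    (hψ : Summable fun i => ‖coeff i ψ * ∏ j, z j ^ i j‖) :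
    ∑' i, coeff i (φ * ψ) * ∏ j, z j ^ i j =
      (∑' i, coeff i φ * ∏ j, z j ^ i j) * ∑' i, coeff i ψ * ∏ j, z j ^ i j := by
  classical
  have hprod := summable_mul_of_summable_norm hφ hψ
  rw [hφ.of_norm.tsum_mul_tsum_eq_tsum_sum_antidiagonal hψ.of_norm hprod]
  refine tsum_congr fun i => ?_
  rw [coeff_mul, Finset.sum_mul]
  refine Finset.sum_congr rfl fun kl hkl => ?_
  rw [← Finset.HasAntidiagonal.mem_antidiagonal.mp hkl, prod_pow_add]
  ring

end

theorem stmt1_general {n : ℕ} (G H : MvPolynomial (Fin n) ℂ)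
    (hcop : IsCoprime G H) (hH0 : eval (0 : Fin n → ℂ) H ≠ 0)
    (z : Fin n → ℂ) (hz : eval z H = 0) :
    z ∉ domConv G H := by
  intro hz_mem
  have hF : Summable fun i => ‖coeffF G H i * ∏ j, z j ^ i j‖ := interior_subset (a := z) hz_mem
  have hH_coeff_zero : MvPowerSeries.constantCoeff (H : MvPowerSeries (Fin n) ℂ) ≠ 0 := by
    rwa [← MvPowerSeries.coeff_zero_eq_constantCoeff_apply, coeff_coe,
      ← constantCoeff_eq, ← eval_zero]
  have hFH : (G : MvPowerSeries (Fin n) ℂ) * (H : MvPowerSeries (Fin n) ℂ)⁻¹ * H = G := by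
    rw [mul_assoc, MvPowerSeries.inv_mul_cancel _ hH_coeff_zero, mul_one]
  have hG : eval z G = 0 := by
    have hCauchy := MvPowerSeries.tsum_coeff_mul_mul_prod_pow _ (H : MvPowerSeries (Fin n) ℂ) z hF
      (by simpa only [coeff_coe] using H.summable_norm_coeff_mul_prod_pow z)
    simpa only [hFH, coeff_coe, (hasSum_coeff_mul_prod_pow _ z).tsum_eq, hz, mul_zero]
      using hCauchy
  exact not_isUnit_zero (hG ▸ isCoprime_zero_right.mp (hz ▸ hcop.map (eval z)))

/-- The singular variety `𝒱 = {z : H(z) = 0}` does not intersect the domain of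
    convergence `𝒟` of `F = G/H`. -/
theorem stmt1 {n : ℕ} (hn : 1 ≤ n) (G H : MvPolynomial (Fin n) ℂ)
    (hcop : IsCoprime G H) (hH0 : eval (0 : Fin n → ℂ) H ≠ 0)
    (z : Fin n → ℂ) (hz : eval z H = 0) :
    z ∉ domConv G H :=
  stmt1_general G H hcop hH0 z hz
end

section
/- Let z ∈ 𝒱 be a point all of whose coordinates are nonzero. If z is a local extremum, among points of 𝒱 (with ℂⁿ identified with ℝ^{2n}), of the map Abs : z ↦ |z₁⋯z_n|, then z satisfies the critical-point equations z₁(∂H/∂z₁)(z) = z₂(∂H/∂z₂)(z) = ⋯ = z_n(∂H/∂z_n)(z); that is, z is a critical point. -/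
/-!
If `z_j ∂_jH(z) ≠ z_k ∂_kH(z)`, the map `x ↦ (H x, ∏ x_i)` is a submersion at `z`: its
differential sends `z_j e_j` and `z_k e_k` to `(z_j ∂_jH(z), ∏ z)` and `(z_k ∂_kH(z), ∏ z)`,
which are independent because `∏ z ≠ 0`. By the inverse function theorem the product therefore
takes every value near `∏ z` at points of `𝒱` near `z`, so `|∏ x|` takes values on both sides
of `|∏ z|` there, and `z` is no local extremum.
-/

open MvPolynomial Filter Topology

theorem MvPolynomial.hasStrictFDerivAt_eval {σ 𝕜 : Type*} [Fintype σ]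
    [NontriviallyNormedField 𝕜] (p : MvPolynomial σ 𝕜) (x : σ → 𝕜) :
    HasStrictFDerivAt (fun y => eval y p)
      (∑ i, eval x (pderiv i p) • (ContinuousLinearMap.proj i : (σ → 𝕜) →L[𝕜] 𝕜))
      x := by
  induction p using MvPolynomial.induction_on with
  | C a =>
    simp only [eval_C]
    refine (hasStrictFDerivAt_const a x).congr_fderiv ?_
    ext v; simp
  | add p q hp hq =>
    simp only [map_add]
    refine (hp.add hq).congr_fderiv ?_
    ext v; simp [add_mul, Finset.sum_add_distrib]
  | mul_X p i hp =>
    classical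
    simp only [map_mul, eval_X]
    refine (hp.mul (hasStrictFDerivAt_apply i x)).congr_fderiv ?_
    ext v
    simp [pderiv_X, Pi.single_apply, add_mul, Finset.sum_add_distrib, Finset.mul_sum, mul_assoc,
      apply_ite]

theorem LinearMap.range_prod_eq_top_of_mul_sub_mul_ne_zero {𝕜 E : Type*} [Field 𝕜]
    [AddCommGroup E] [Module 𝕜 E] {φ ψ : E →ₗ[𝕜] 𝕜} {v w : E}
    (h : φ v * ψ w - φ w * ψ v ≠ 0) :
    LinearMap.range (φ.prod ψ) = ⊤ := by
  refine LinearMap.range_eq_top.2 fun ⟨s, t⟩ => ?_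
  refine ⟨((s * ψ w - t * φ w) / (φ v * ψ w - φ w * ψ v)) • v +
    ((t * φ v - s * ψ v) / (φ v * ψ w - φ w * ψ v)) • w, ?_⟩
  ext <;> simp only [LinearMap.prod_apply, Function.prod, map_add, map_smul, Prod.fst_add,
    Prod.snd_add, Prod.smul_fst, Prod.smul_snd, smul_eq_mul] <;>
    rw [div_mul_eq_mul_div, div_mul_eq_mul_div, ← add_div, div_eq_iff h] <;> ring

theorem nhds_le_map_nhdsWithin_preimage {X Y Z : Type*} [TopologicalSpace X]
    [TopologicalSpace Y] [TopologicalSpace Z] {f : X → Y} {g : X → Z} {x : X} {y : Y}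
    (h : 𝓝 (y, g x) ≤ Filter.map (fun x => (f x, g x)) (𝓝 x)) :
    𝓝 (g x) ≤ Filter.map g (𝓝[f ⁻¹' {y}] x) := by
  intro s hs
  obtain ⟨U, hU, hUs⟩ := mem_nhdsWithin_iff_exists_mem_nhds_inter.1 hs
  have hy : ∀ᶠ c in 𝓝 (g x), (y, c) ∈ (fun x => (f x, g x)) '' U :=
    (Continuous.prodMk_right y).continuousAt.preimage_mem_nhds (h (image_mem_map hU))
  filter_upwards [hy] with c ⟨x', hx'U, hx'⟩
  cases hx'
  exact hUs ⟨hx'U, rfl⟩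

theorem not_isLocalMax_norm {E : Type*} [NormedAddCommGroup E] [NormedSpace ℝ E] {x : E}
    (hx : x ≠ 0) : ¬ IsLocalMax norm x := by
  intro h
  have hray : ∀ᶠ r : ℝ in 𝓝 1, ‖r • x‖ ≤ ‖x‖ :=
    ((continuous_id.smul continuous_const).tendsto' 1 x (one_smul ℝ x)).eventually h
  obtain ⟨r, hr, hle⟩ := ((frequently_gt_nhds (1 : ℝ)).and_eventually hray).exists
  rw [norm_smul, Real.norm_of_nonneg (by linarith)] at hle
  nlinarith [norm_pos_iff.2 hx]

theorem not_isLocalMin_norm {E : Type*} [NormedAddCommGroup E] [NormedSpace ℝ E] {x : E}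
    (hx : x ≠ 0) : ¬ IsLocalMin norm x := by
  intro h
  have hray : ∀ᶠ r : ℝ in 𝓝 1, ‖x‖ ≤ ‖r • x‖ :=
    ((continuous_id.smul continuous_const).tendsto' 1 x (one_smul ℝ x)).eventually h
  obtain ⟨r, hr, hle, hpos⟩ :=
    ((frequently_lt_nhds (1 : ℝ)).and_eventually (hray.and (lt_mem_nhds one_pos))).exists
  rw [norm_smul, Real.norm_of_nonneg hpos.le] at hle
  nlinarith [norm_pos_iff.2 hx]

theorem MvPolynomial.nhds_prod_le_map_prod_nhdsWithin_zeroSet {σ 𝕜 : Type*} [Fintype σ]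
    [DecidableEq σ] [NontriviallyNormedField 𝕜] [CompleteSpace 𝕜] {H : MvPolynomial σ 𝕜}
    {z : σ → 𝕜} (hz : eval z H = 0) (hP : ∏ i, z i ≠ 0) {j k : σ}
    (hne : z j * eval z (pderiv j H) ≠ z k * eval z (pderiv k H)) :
    𝓝 (∏ i, z i) ≤ Filter.map (fun x => ∏ i, x i) (𝓝[{x | eval x H = 0}] z) := by
  have hH := H.hasStrictFDerivAt_eval z
  have hprod := hasStrictFDerivAt_finsetProd (𝕜 := 𝕜) (u := Finset.univ) (x := z)
  refine nhds_le_map_nhdsWithin_preimage (f := fun x => eval x H) (y := 0) ?_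
  rw [← hz]
  refine ((hH.prodMk hprod).map_nhds_eq_of_surj ?_).ge
  refine LinearMap.range_prod_eq_top_of_mul_sub_mul_ne_zero
    (v := Pi.single j (z j)) (w := Pi.single k (z k)) ?_
  convert mul_ne_zero hP (sub_ne_zero.2 hne) using 1
  simp [Pi.single_apply, Finset.mul_prod_erase, mul_sub, mul_comm, mul_left_comm]

theorem stmt4_general {n : ℕ} (H : MvPolynomial (Fin n) ℂ)
    (z : Fin n → ℂ) (hzV : eval z H = 0) (hznz : ∀ j, z j ≠ 0)
    (hext :
      IsLocalMaxOn (fun z : Fin n → ℂ => ‖∏ j, z j‖)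
        {z : Fin n → ℂ | eval z H = 0} z ∨
      IsLocalMinOn (fun z : Fin n → ℂ => ‖∏ j, z j‖)
        {z : Fin n → ℂ | eval z H = 0} z) :
    ∀ j k, z j * eval z (pderiv j H) = z k * eval z (pderiv k H) := by
  intro j k
  by_contra hne
  have hP : ∏ i, z i ≠ 0 := Finset.prod_ne_zero_iff.2 fun i _ => hznz i
  have hopen := nhds_prod_le_map_prod_nhdsWithin_zeroSet hzV hP hne
  rcases hext with hmax | hmin
  · exact not_isLocalMax_norm hP (hopen hmax)
  · exact not_isLocalMin_norm hP (hopen hmin)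

/-- If `z ∈ 𝒱` has all coordinates nonzero and is a local extremum of
    `Abs : z ↦ |z₁⋯z_n|` on the singular variety `𝒱 = {H = 0}`, then `z` satisfies the
    critical-point equations `z₁ ∂H/∂z₁(z) = ⋯ = z_n ∂H/∂z_n(z)`. -/
theorem stmt4 {n : ℕ} (hn : 1 ≤ n) (H : MvPolynomial (Fin n) ℂ)
    (z : Fin n → ℂ) (hzV : eval z H = 0) (hznz : ∀ j, z j ≠ 0)
    (hext :
      IsLocalMaxOn (fun z : Fin n → ℂ => ‖∏ j, z j‖)
        {z : Fin n → ℂ | eval z H = 0} z ∨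
      IsLocalMinOn (fun z : Fin n → ℂ => ‖∏ j, z j‖)
        {z : Fin n → ℂ | eval z H = 0} z) :
    ∀ j k, z j * eval z (pderiv j H) = z k * eval z (pderiv k H) :=
  stmt4_general H z hzV hznz hext
end

section
/- Let ζ ∈ 𝒱 be a point all of whose coordinates are nonzero, with (∂H/∂z_n)(ζ) ≠ 0. Let U be an open neighbourhood of ζ̂ = (ζ₁,…,ζ_{n−1}) in ℂ^{n−1} and let g : U → ℂ be analytic with g(ζ̂) = ζ_n and H(ẑ, g(ẑ)) = 0 for all ẑ ∈ U. Define ψ(ẑ) = z₁⋯z_{n−1}·g(ẑ) on U. Then ζ satisfies the critical-point equations ζ₁(∂H/∂z₁)(ζ) = ⋯ = ζ_n(∂H/∂z_n)(ζ) if and only if the gradient of ψ vanishes at ζ̂, i.e., (∂ψ/∂z_i)(ζ̂) = 0 for all i = 1,…,n−1. -/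
/-!
Differentiating `H(ẑ, g(ẑ)) ≡ 0` at `ζ̂` gives `∂ᵢH(ζ) + ∂ₙH(ζ) · ∂ᵢg(ζ̂) = 0`. Writing
`ψ = zᵢ · Qᵢ · g` with `Qᵢ = ∏_{k ≠ i} z_k`, this turns into
`∂ₙH(ζ) · ∂ᵢψ(ζ̂) = Qᵢ(ζ̂) · (ζₙ ∂ₙH(ζ) - ζᵢ ∂ᵢH(ζ))`, and both `∂ₙH(ζ)` and `Qᵢ(ζ̂)` are nonzero.
-/

open MvPolynomial Filter Topology

section

variable {𝕜 : Type*} [NontriviallyNormedField 𝕜]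

theorem MvPolynomial.hasFDerivAt_eval {σ : Type*} [Fintype σ] (H : MvPolynomial σ 𝕜)
    (x : σ → 𝕜) :
    HasFDerivAt (fun y => eval y H)
      (∑ j, eval x (pderiv j H) • (ContinuousLinearMap.proj j : (σ → 𝕜) →L[𝕜] 𝕜)) x := by
  classical
  induction H using MvPolynomial.induction_on with
  | C a =>
    simp only [eval_C]
    refine (hasFDerivAt_const a x).congr_fderiv ?_
    ext v
    simp
  | add p q hp hq =>
    simp only [map_add]
    exact (hp.add hq).congr_fderiv (by ext; simp [add_mul, Finset.sum_add_distrib])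
  | mul_X p j hp =>
    simp only [map_mul, eval_X]
    refine (hp.mul (hasFDerivAt_apply j x)).congr_fderiv ?_
    ext v
    simp [pderiv_X, Pi.single_apply, Finset.sum_add_distrib, add_mul, Finset.mul_sum, mul_assoc,
      apply_ite (eval x)]

theorem Fin.hasFDerivAt_snoc {n : ℕ} {g : (Fin n → 𝕜) → 𝕜} {g' : (Fin n → 𝕜) →L[𝕜] 𝕜}
    {z : Fin n → 𝕜} (hg : HasFDerivAt g g' z) :
    HasFDerivAt (fun w => (Fin.snoc w (g w) : Fin (n + 1) → 𝕜))
      (ContinuousLinearMap.pi (Fin.snoc (fun i => ContinuousLinearMap.proj i) g')) z := by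
  refine hasFDerivAt_pi'' fun j => ?_
  rw [ContinuousLinearMap.proj_pi]
  induction j using Fin.lastCases with
  | last => simpa using hg
  | cast i => simpa using hasFDerivAt_apply i z

theorem MvPolynomial.pderiv_castSucc_add_mul_fderiv_eq_zero {n : ℕ}
    (H : MvPolynomial (Fin (n + 1)) 𝕜) {g : (Fin n → 𝕜) → 𝕜} {z : Fin n → 𝕜}
    (hg : DifferentiableAt 𝕜 g z) (hgH : ∀ᶠ w in 𝓝 z, eval (Fin.snoc w (g w)) H = 0)
    (i : Fin n) :
    eval (Fin.snoc z (g z)) (pderiv i.castSucc H) +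
      eval (Fin.snoc z (g z)) (pderiv (Fin.last n) H) * fderiv 𝕜 g z (Pi.single i 1) = 0 := by
  have hcomp := (H.hasFDerivAt_eval _).comp z (Fin.hasFDerivAt_snoc hg.hasFDerivAt)
  have hzero := ((hasFDerivAt_const (0 : 𝕜) z).congr_of_eventuallyEq hgH).unique hcomp
  simpa [Fin.sum_univ_castSucc, Pi.single_apply] using congr($hzero (Pi.single i 1)).symm

theorem fderiv_prod_mul_apply_single {ι : Type*} [Fintype ι] [DecidableEq ι]
    {g : (ι → 𝕜) → 𝕜} {z : ι → 𝕜} (hg : DifferentiableAt 𝕜 g z) (i : ι) :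
    fderiv 𝕜 (fun w => (∏ l, w l) * g w) z (Pi.single i 1) =
      (∏ l, z l) * fderiv 𝕜 g z (Pi.single i 1) + g z * ∏ k ∈ Finset.univ.erase i, z k := by
  have hprod := HasFDerivAt.finsetProd (u := Finset.univ) (g := fun l (w : ι → 𝕜) => w l)
    fun l _ => hasFDerivAt_apply (𝕜 := 𝕜) l z
  rw [(hprod.fun_mul hg.hasFDerivAt).fderiv]
  simp [Pi.single_apply]

theorem Fin.forall_forall_eq_iff_forall_eq_last {α : Type*} {n : ℕ} (f : Fin (n + 1) → α) :
    (∀ j k, f j = f k) ↔ ∀ i : Fin n, f i.castSucc = f (Fin.last n) := by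
  refine ⟨fun h i => h _ _, fun h j k => ?_⟩
  have hlast : ∀ j, f j = f (Fin.last n) := fun j => Fin.lastCases rfl h j
  rw [hlast j, hlast k]

end

theorem stmt6_general {n : ℕ} (H : MvPolynomial (Fin (n + 1)) ℂ)
    (ζ : Fin (n + 1) → ℂ) (hζnz : ∀ j, ζ j ≠ 0)
    (hlast : eval ζ (pderiv (Fin.last n) H) ≠ 0)
    (U : Set (Fin n → ℂ)) (hU : IsOpen U) (hζU : Fin.init ζ ∈ U)
    (g : (Fin n → ℂ) → ℂ) (hg : AnalyticOnNhd ℂ g U)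
    (hgζ : g (Fin.init ζ) = ζ (Fin.last n))
    (hgH : ∀ zh ∈ U, eval (Fin.snoc zh (g zh)) H = 0) :
    (∀ j k : Fin (n + 1), ζ j * eval ζ (pderiv j H) = ζ k * eval ζ (pderiv k H)) ↔
      (∀ i : Fin n,
        fderiv ℂ (fun zh : Fin n → ℂ => (∏ l, zh l) * g zh) (Fin.init ζ)
          (Pi.single i 1) = 0) := by
  have hgd : DifferentiableAt ℂ g (Fin.init ζ) := (hg _ hζU).differentiableAt
  have himplicit := H.pderiv_castSucc_add_mul_fderiv_eq_zero hgd
    (eventually_of_mem (hU.mem_nhds hζU) hgH)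
  rw [hgζ, Fin.snoc_init_self] at himplicit
  rw [Fin.forall_forall_eq_iff_forall_eq_last]
  refine forall_congr' fun i => ?_
  rw [fderiv_prod_mul_apply_single hgd, ← Finset.mul_prod_erase _ _ (Finset.mem_univ i), hgζ]
  set Q := ∏ k ∈ Finset.univ.erase i, Fin.init ζ k
  have hQ : Q ≠ 0 := Finset.prod_ne_zero_iff.2 fun k _ => hζnz _
  have key : eval ζ (pderiv (Fin.last n) H) *
      (Fin.init ζ i * Q * fderiv ℂ g (Fin.init ζ) (Pi.single i 1) + ζ (Fin.last n) * Q) =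
      Q * (ζ (Fin.last n) * eval ζ (pderiv (Fin.last n) H) -
        Fin.init ζ i * eval ζ (pderiv i.castSucc H)) := by
    linear_combination (Fin.init ζ i * Q) * himplicit i
  rw [← mul_eq_zero_iff_left hlast, key, mul_eq_zero_iff_left hQ, sub_eq_zero]
  exact eq_comm

/-- Let `H` be a polynomial in `n+1 ≥ 2` complex variables, `ζ ∈ 𝒱` with all
    coordinates nonzero and `∂H/∂z_n(ζ) ≠ 0`. Let `g` be analytic on an open
    neighbourhood `U` of `ζ̂ = (ζ₁,…,ζ_{n-1})` with `g(ζ̂) = ζ_n` and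
    `H(ẑ, g(ẑ)) = 0` on `U`, and set `ψ(ẑ) = z₁⋯z_{n-1}·g(ẑ)`. Then `ζ` satisfies
    the critical-point equations iff `∇ψ(ζ̂) = 0`. -/
theorem stmt6 {n : ℕ} (hn : 1 ≤ n) (H : MvPolynomial (Fin (n + 1)) ℂ)
    (ζ : Fin (n + 1) → ℂ) (hζV : eval ζ H = 0) (hζnz : ∀ j, ζ j ≠ 0)
    (hlast : eval ζ (pderiv (Fin.last n) H) ≠ 0)
    (U : Set (Fin n → ℂ)) (hU : IsOpen U) (hζU : Fin.init ζ ∈ U)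
    (g : (Fin n → ℂ) → ℂ) (hg : AnalyticOnNhd ℂ g U)
    (hgζ : g (Fin.init ζ) = ζ (Fin.last n))
    (hgH : ∀ zh ∈ U, eval (Fin.snoc zh (g zh)) H = 0) :
    (∀ j k : Fin (n + 1), ζ j * eval ζ (pderiv j H) = ζ k * eval ζ (pderiv k H)) ↔
      (∀ i : Fin n,
        fderiv ℂ (fun zh : Fin n → ℂ => (∏ l, zh l) * g zh) (Fin.init ζ)
          (Pi.single i 1) = 0) :=
  stmt6_general H ζ hζnz hlast U hU hζU g hg hgζ hgH
end

section
/- For every point w ∈ ∂𝒟 all of whose coordinates are nonzero, the exponential growth rate of the diagonal coefficient sequence satisfies limsup_{k→∞} |f_{k,…,k}|^{1/k} ≤ |w₁ w₂ ⋯ w_n|^{−1}. -/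
/-!
Summability of `(f_i z^i)` at a point `z` bounds every term, so `|f_{k,…,k}| |z₁⋯z_n|^k` is
bounded in `k` and `limsup_k |f_{k,…,k}|^{1/k} · |z₁⋯z_n| ≤ 1`. This inequality is closed in `z`,
so it passes from the domain of convergence to its closure, which contains `∂𝒟`; at a point
with nonzero coordinates one may divide by `|w₁⋯w_n|`.
-/

open MvPolynomial

/-- The diagonal index `(k, …, k)` as a finitely supported function. -/
noncomputable def diagIdx (n k : ℕ) : Fin n →₀ ℕ :=
  Finsupp.equivFunOnFinite.symm fun _ => k

open Filter Topology

theorem limsup_rpow_inv_le_of_mul_pow_le {a : ℕ → ℝ} {r C : ℝ} (ha : ∀ k, 0 ≤ a k)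
    (hr : 0 < r) (h : ∀ k, a k * r ^ k ≤ C) :
    limsup (fun k : ℕ => a k ^ (k : ℝ)⁻¹) atTop ≤ r⁻¹ := by
  obtain ⟨D, hD, hCD⟩ : ∃ D : ℝ, 0 < D ∧ C ≤ D := ⟨max C 1, by positivity, le_max_left _ _⟩
  have hbound : ∀ᶠ k : ℕ in atTop, a k ^ (k : ℝ)⁻¹ ≤ D ^ (k : ℝ)⁻¹ * r⁻¹ := by
    filter_upwards [eventually_ne_atTop 0] with k hk
    have hak : a k ≤ D * r⁻¹ ^ k := by
      rw [inv_pow, ← div_eq_mul_inv, le_div_iff₀ (pow_pos hr k)]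
      exact (h k).trans hCD
    calc a k ^ (k : ℝ)⁻¹ ≤ (D * r⁻¹ ^ k) ^ (k : ℝ)⁻¹ := by gcongr; exact ha k
      _ = D ^ (k : ℝ)⁻¹ * r⁻¹ := by
        rw [Real.mul_rpow hD.le (by positivity), Real.pow_rpow_inv_natCast (by positivity) hk]
  have hroot : Tendsto (fun k : ℕ => D ^ (k : ℝ)⁻¹) atTop (𝓝 1) := by
    simpa [Function.comp_def] using
      (Real.continuousAt_const_rpow (b := 0) hD.ne').tendsto.comp tendsto_inv_atTop_nhds_zero_nat
  have hlim : Tendsto (fun k : ℕ => D ^ (k : ℝ)⁻¹ * r⁻¹) atTop (𝓝 r⁻¹) := by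
    simpa using hroot.mul_const r⁻¹
  calc limsup (fun k : ℕ => a k ^ (k : ℝ)⁻¹) atTop
      ≤ limsup (fun k : ℕ => D ^ (k : ℝ)⁻¹ * r⁻¹) atTop :=
        limsup_le_limsup hbound
          (isCoboundedUnder_le_of_le _ fun k => Real.rpow_nonneg (ha k) _)
          hlim.isBoundedUnder_le
    _ = r⁻¹ := hlim.limsup_eq

theorem prod_pow_diagIdx {n : ℕ} (z : Fin n → ℂ) (k : ℕ) :
    ∏ j, z j ^ diagIdx n k j = (∏ j, z j) ^ k := by
  simp [diagIdx, Finset.prod_pow]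

theorem limsup_diag_mul_norm_prod_le_one_of_summable {n : ℕ} {G H : MvPolynomial (Fin n) ℂ}
    {z : Fin n → ℂ} (hz : Summable fun i : Fin n →₀ ℕ => ‖coeffF G H i * ∏ j, z j ^ i j‖) :
    limsup (fun k : ℕ => ‖coeffF G H (diagIdx n k)‖ ^ (k : ℝ)⁻¹) atTop * ‖∏ j, z j‖ ≤ 1 := by
  rcases (norm_nonneg (∏ j, z j)).eq_or_lt with hzero | hpos
  · rw [← hzero, mul_zero]
    exact zero_le_one
  rw [← le_div_iff₀ hpos, one_div]
  refine limsup_rpow_inv_le_of_mul_pow_le (C := ∑' i, ‖coeffF G H i * ∏ j, z j ^ i j‖)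
    (fun _ => norm_nonneg _) hpos fun k => ?_
  calc ‖coeffF G H (diagIdx n k)‖ * ‖∏ j, z j‖ ^ k
      = ‖coeffF G H (diagIdx n k) * ∏ j, z j ^ diagIdx n k j‖ := by
        rw [prod_pow_diagIdx, norm_mul, norm_pow]
    _ ≤ _ := hz.le_tsum (diagIdx n k) fun _ _ => norm_nonneg _

theorem limsup_diag_mul_norm_prod_le_one_of_mem_closure {n : ℕ} {G H : MvPolynomial (Fin n) ℂ}
    {w : Fin n → ℂ} (hw : w ∈ closure (domConv G H)) :
    limsup (fun k : ℕ => ‖coeffF G H (diagIdx n k)‖ ^ (k : ℝ)⁻¹) atTop * ‖∏ j, w j‖ ≤ 1 := by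
  have hclosed : IsClosed {z : Fin n → ℂ |
      limsup (fun k : ℕ => ‖coeffF G H (diagIdx n k)‖ ^ (k : ℝ)⁻¹) atTop * ‖∏ j, z j‖ ≤ 1} :=
    isClosed_le (by fun_prop) continuous_const
  exact closure_minimal
    (interior_subset.trans fun _ hz => limsup_diag_mul_norm_prod_le_one_of_summable hz) hclosed hw

theorem stmt14_general {n : ℕ} (G H : MvPolynomial (Fin n) ℂ)
    (w : Fin n → ℂ) (hw : w ∈ frontier (domConv G H)) (hwnz : ∀ j, w j ≠ 0) :
    Filter.limsup
        (fun k : ℕ => ‖coeffF G H (diagIdx n k)‖ ^ ((k : ℝ)⁻¹))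
        Filter.atTop
      ≤ ‖∏ j, w j‖⁻¹ := by
  have hpos : 0 < ‖∏ j, w j‖ := norm_pos_iff.mpr (Finset.prod_ne_zero_iff.mpr fun j _ => hwnz j)
  rw [← one_div, le_div_iff₀ hpos]
  exact limsup_diag_mul_norm_prod_le_one_of_mem_closure (frontier_subset_closure hw)

/-- For any point `w ∈ ∂𝒟` with all coordinates nonzero, the exponential growth rate
    of the diagonal coefficients satisfies
    `limsup_k |f_{k,…,k}|^{1/k} ≤ |w₁⋯w_n|⁻¹`. -/
theorem stmt14 {n : ℕ} (hn : 1 ≤ n) (G H : MvPolynomial (Fin n) ℂ)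
    (hcop : IsCoprime G H) (hH0 : eval (0 : Fin n → ℂ) H ≠ 0)
    (w : Fin n → ℂ) (hw : w ∈ frontier (domConv G H)) (hwnz : ∀ j, w j ≠ 0) :
    Filter.limsup
        (fun k : ℕ => ‖coeffF G H (diagIdx n k)‖ ^ ((k : ℝ)⁻¹))
        Filter.atTop
      ≤ ‖∏ j, w j‖⁻¹ :=
  stmt14_general G H w hw hwnz
end
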